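/- For every integer n ≥ 1, the expected online domination number of the path satisfies the recurrence γ_o(P_n) = 1 + (2/n) · Σ_{i=1}^{n-2} γ_o(P_i). -/

import Mathlib

/- The path graph `P n` on `Fin n`: vertex `v` represents the label `v + 1 ∈ {1, ..., n}`,
   and consecutive labels are adjacent. -/
def pathGraph (n : ℕ) : SimpleGraph (Fin n) where
  Adj i j := (i : ℕ) + 1 = j ∨ (j : ℕ) + 1 = i
  symm := ⟨fun i j h => Or.symm h⟩
  loopless := ⟨fun i (h : (i : ℕ) + 1 = i ∨ (i : ℕ) + 1 = i) => by omega⟩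

/- The dominating set produced by the online domination algorithm on `G` when vertices are
   revealed in the order of the list `l`: a revealed vertex is added iff no neighbor is
   already in the set. -/
open Classical in
noncomputable def domList {V : Type*} [DecidableEq V] (G : SimpleGraph V) (l : List V) : Finset V :=
  l.foldl (fun D v => if ∃ w ∈ D, G.Adj w v then D else insert v D) ∅

/- `Γ(π)`: the dominating set produced on `P n` when vertices are revealed in the order
   `π 0, π 1, ..., π (n-1)`. -/
noncomputable def GammaSet (n : ℕ) (π : Equiv.Perm (Fin n)) : Finset (Fin n) :=
  domList (pathGraph n) (List.ofFn fun i => π i)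

/- `γ(π) = |Γ(π)|`. -/
noncomputable def gamma (n : ℕ) (π : Equiv.Perm (Fin n)) : ℕ := (GammaSet n π).card

/- `γ_o(P n)`: the expected size of the dominating set produced by the online algorithm on the
   path `P n`, for a uniformly random permutation. -/
noncomputable def gammaOPath (n : ℕ) : ℝ :=
  (∑ π : Equiv.Perm (Fin n), (gamma n π : ℝ)) / (Nat.factorial n)


/-! If the first revealed vertex is the `k`-th one of `P n`, it enters the dominating set, its
neighbours never do, and the vertices on either side of its closed neighbourhood behave as the
online algorithm on paths with `k - 2` and `n - k - 1` vertices, revealed in the induced order.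
Restricting a uniformly random ordering of a set to a subset gives a uniformly random ordering of
the subset, so the two sides contribute `γ_o(P (k-2)) + γ_o(P (n-k-1))` in expectation, and
averaging over `k` gives the recurrence. -/

open Finset Nat
open SimpleGraph (hasse)

section domList

variable {V W : Type*} [DecidableEq V] [DecidableEq W] {G : SimpleGraph V} {H : SimpleGraph W}

open Classical in
noncomputable def domStep (G : SimpleGraph V) (D : Finset V) (v : V) : Finset V :=
  if ∃ w ∈ D, G.Adj w v then D else insert v D

theorem domList_eq_foldl (G : SimpleGraph V) (l : List V) :
    domList G l = l.foldl (domStep G) ∅ := rfl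

theorem subset_domStep (D : Finset V) (v : V) : D ⊆ domStep G D v := by
  unfold domStep; split_ifs <;> simp

theorem domStep_subset (D : Finset V) (v : V) : domStep G D v ⊆ insert v D := by
  unfold domStep; split_ifs <;> simp

theorem foldl_domStep_subset (l : List V) (D : Finset V) :
    l.foldl (domStep G) D ⊆ D ∪ l.toFinset := by
  induction l generalizing D with
  | nil => simp
  | cons v l ih =>
    refine (ih _).trans (union_subset_union (domStep_subset D v) subset_rfl) |>.trans ?_
    intro x
    simp

theorem domList_subset (l : List V) : domList G l ⊆ l.toFinset := by
  simpa [domList_eq_foldl] using foldl_domStep_subset (G := G) l ∅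

theorem domStep_map (f : G ↪g H) (D : Finset V) (v : V) :
    domStep H (D.map f.toEmbedding) (f v) = (domStep G D v).map f.toEmbedding := by
  have : (∃ w ∈ D.map f.toEmbedding, H.Adj w (f v)) ↔ ∃ w ∈ D, G.Adj w v := by simp
  unfold domStep
  split_ifs <;> simp_all [map_insert]

theorem foldl_domStep_map (f : G ↪g H) (l : List V) (D : Finset V) :
    (l.map f).foldl (domStep H) (D.map f.toEmbedding) =
      (l.foldl (domStep G) D).map f.toEmbedding := by
  induction l generalizing D with
  | nil => rfl
  | cons v l ih => simp only [List.map_cons, List.foldl_cons, domStep_map, ih]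

theorem domList_map (f : G ↪g H) (l : List V) :
    domList H (l.map f) = (domList G l).map f.toEmbedding := by
  simpa [domList_eq_foldl] using foldl_domStep_map f l ∅

theorem foldl_domStep_insert {k : V} (l : List V) (hl : ∀ v ∈ l, ¬ G.Adj k v) (D : Finset V) :
    l.foldl (domStep G) (insert k D) = insert k (l.foldl (domStep G) D) := by
  induction l generalizing D with
  | nil => rfl
  | cons v l ih =>
    have hv : (∃ w ∈ insert k D, G.Adj w v) ↔ ∃ w ∈ D, G.Adj w v := by
      simp [hl v (List.mem_cons_self ..)]
    have hstep : domStep G (insert k D) v = insert k (domStep G D v) := by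
      unfold domStep; split_ifs <;> simp_all [Finset.insert_comm]
    rw [List.foldl_cons, List.foldl_cons, hstep, ih fun u hu => hl u (List.mem_cons_of_mem _ hu)]

theorem foldl_domStep_filter_not_adj [DecidableRel G.Adj] {k : V} (l : List V) {D : Finset V}
    (hk : k ∈ D) : l.foldl (domStep G) D = (l.filter (¬ G.Adj k ·)).foldl (domStep G) D := by
  induction l generalizing D with
  | nil => rfl
  | cons v l ih =>
    by_cases hkv : G.Adj k v
    · have : domStep G D v = D := if_pos ⟨k, hk, hkv⟩
      simp [hkv, this, ih hk]
    · simp [hkv, ih (subset_domStep D v hk)]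

theorem domList_cons [DecidableRel G.Adj] (k : V) (l : List V) :
    domList G (k :: l) = insert k (domList G (l.filter (¬ G.Adj k ·))) := by
  have hk : domStep G ∅ k = insert k ∅ := if_neg (by simp)
  rw [domList_eq_foldl, List.foldl_cons, hk, foldl_domStep_filter_not_adj l (mem_insert_self k ∅),
    foldl_domStep_insert _ (by simp), domList_eq_foldl]

theorem filter_domStep (p : V → Prop) [DecidablePred p] (D : Finset V) (v : V)
    (hp : ∀ w ∈ D, G.Adj w v → (p w ↔ p v)) :
    (domStep G D v).filter p = if p v then domStep G (D.filter p) v else D.filter p := by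
  unfold domStep
  by_cases hpv : p v
  · have hv : (∃ w ∈ D, G.Adj w v) ↔ ∃ w ∈ D.filter p, G.Adj w v :=
      ⟨fun ⟨w, hw, hwv⟩ => ⟨w, mem_filter.2 ⟨hw, (hp w hw hwv).2 hpv⟩, hwv⟩,
        fun ⟨w, hw, hwv⟩ => ⟨w, (mem_filter.1 hw).1, hwv⟩⟩
    by_cases hD : ∃ w ∈ D, G.Adj w v
    · rw [if_pos hpv, if_pos hD, if_pos (hv.1 hD)]
    · rw [if_pos hpv, if_neg hD, if_neg (mt hv.2 hD), filter_insert, if_pos hpv]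
  · rw [if_neg hpv]
    split_ifs
    · rfl
    · rw [filter_insert, if_neg hpv]

theorem filter_foldl_domStep (p : V → Prop) [DecidablePred p] (l : List V) (D : Finset V)
    (hp : ∀ u v, G.Adj u v → (u ∈ D ∨ u ∈ l) → v ∈ l → (p u ↔ p v)) :
    (l.foldl (domStep G) D).filter p = (l.filter (p ·)).foldl (domStep G) (D.filter p) := by
  induction l generalizing D with
  | nil => rfl
  | cons v l ih =>
    rw [List.foldl_cons, ih, filter_domStep p D v fun w hw hwv => hp w v hwv (.inl hw) (by simp)]
    · by_cases hpv : p v <;> simp [hpv]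
    · intro u w huw hu hw
      refine hp u w huw ?_ (List.mem_cons_of_mem _ hw)
      rcases hu with hu | hu
      · rcases mem_insert.1 (domStep_subset D v hu) with rfl | hu
        exacts [.inr (List.mem_cons_self ..), .inl hu]
      · exact .inr (List.mem_cons_of_mem _ hu)

theorem filter_domList (p : V → Prop) [DecidablePred p] (l : List V)
    (hp : ∀ u ∈ l, ∀ v ∈ l, G.Adj u v → (p u ↔ p v)) :
    (domList G l).filter p = domList G (l.filter (p ·)) := by
  rw [domList_eq_foldl,
    filter_foldl_domStep p l ∅ fun u v huv hu hv => hp u (by simpa using hu) v hv huv]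
  rfl

theorem card_domList_eq_add (p : V → Prop) [DecidablePred p] (l : List V)
    (hp : ∀ u ∈ l, ∀ v ∈ l, G.Adj u v → (p u ↔ p v)) :
    #(domList G l) = #(domList G (l.filter (p ·))) + #(domList G (l.filter (¬ p ·))) := by
  rw [← card_filter_add_card_filter_not p, filter_domList p l hp,
    filter_domList (¬ p ·) l fun u hu v hv huv => not_congr (hp u hu v hv huv)]

end domList

namespace List

variable {α : Type*}

theorem map_filter_permutations'Aux {p : α → Bool} {a : α} (ha : p a = false) (l : List α) :
    (permutations'Aux a l).map (filter p) = replicate (l.length + 1) (l.filter p) := by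
  induction l with
  | nil => simp [permutations'Aux, ha]
  | cons y l ih =>
    have := congrArg (map fun l' => if p y then y :: l' else l') ih
    simp only [map_map, map_replicate] at this
    simp [permutations'Aux, ha, filter_cons, ← this, replicate_succ, Function.comp_def]

end List

namespace Multiset

variable {α β : Type*}

theorem coe_flatMap_replicate (c : ℕ) (f : α → β) (L : List α) :
    ((L.flatMap fun x => List.replicate c (f x) : List β) : Multiset β) =
      c • (L.map f : Multiset β) := by
  induction L with
  | nil => simp
  | cons x L ih =>
    rw [List.flatMap_cons, ← coe_add, ih, List.map_cons, ← cons_coe, nsmul_cons, nsmul_singleton,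
      coe_replicate]

theorem card_lists (s : Multiset α) : card s.lists = (card s)! :=
  Quotient.inductionOn s fun l => by simp [List.length_permutations]

theorem lists_map (f : α → β) (s : Multiset α) : (s.map f).lists = s.lists.map (List.map f) :=
  Quotient.inductionOn s fun l => by simp [List.map_permutations]

protected theorem Nodup.lists {s : Multiset α} (hs : s.Nodup) : s.lists.Nodup :=
  Quotient.inductionOn s (fun l hl => by simpa using List.nodup_permutations l hl) hs

theorem map_filter_lists_cons {p : α → Prop} [DecidablePred p] {a : α} (ha : ¬ p a)
    (s : Multiset α) :
    (a ::ₘ s).lists.map (List.filter (p ·)) = (card s + 1) • s.lists.map (List.filter (p ·)) :=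
  Quotient.inductionOn s fun l => by
    have hperm : ((a :: l).permutations : Multiset (List α)) = (a :: l).permutations' :=
      coe_eq_coe.2 (List.permutations_perm_permutations' _)
    have hlen : ∀ l' ∈ l.permutations', l'.length = l.length := fun l' h =>
      (List.mem_permutations'.1 h).length_eq
    rw [quot_mk_to_coe, cons_coe, lists_coe, hperm, map_coe, List.permutations', List.map_flatMap,
      List.flatMap_congr fun l' hl' => by
        rw [List.map_filter_permutations'Aux (by simpa using ha), hlen l' hl'],
      coe_flatMap_replicate, coe_card, lists_coe, map_coe,
      coe_eq_coe.2 ((List.permutations_perm_permutations' l).map _)]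

/- The elements outside `p` are added one at a time: each can be inserted at `card s + 1`
positions, none of which changes the filtered list. -/
theorem card_filter_factorial_nsmul_map_filter_lists (p : α → Prop) [DecidablePred p]
    (s : Multiset α) :
    (card (s.filter p))! • s.lists.map (List.filter (p ·)) = (card s)! • (s.filter p).lists := by
  suffices h : ∀ u : Multiset α, (∀ x ∈ u, ¬ p x) →
      (card ((s.filter p + u).filter p))! • (s.filter p + u).lists.map (List.filter (p ·)) =
        (card (s.filter p + u))! • ((s.filter p + u).filter p).lists by
    simpa [filter_add_not] using h (s.filter (¬ p ·)) fun x hx => (mem_filter.1 hx).2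
  intro u
  induction u using Multiset.induction_on with
  | empty =>
    intro _
    have hid : ∀ l ∈ (s.filter p).lists, l.filter (p ·) = l := fun l hl =>
      List.filter_eq_self.2 fun x hx => by
        have : x ∈ s.filter p := by rw [(mem_lists_iff _ _).1 hl]; exact hx
        simpa using (mem_filter.1 this).2
    rw [add_zero, filter_filter, map_congr rfl hid, map_id']
    simp only [and_self]
  | cons a u ih =>
    intro hu
    have ha : ¬ p a := hu a (mem_cons_self a u)
    rw [add_cons, map_filter_lists_cons ha, filter_cons_of_neg _ ha, card_cons, factorial_succ,
      smul_comm, ih fun x hx => hu x (mem_cons_of_mem hx), smul_smul]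

theorem Nodup.lists_eq_bind [DecidableEq α] {s : Multiset α} (hs : s.Nodup) (h0 : s ≠ 0) :
    s.lists = s.bind fun k => (s.erase k).lists.map (List.cons k) := by
  refine Nodup.ext hs.lists ?_ |>.2 fun l => ?_
  · refine nodup_bind.2 ⟨fun k _ => (hs.erase k).lists.map List.cons_injective, ?_⟩
    refine hs.pairwise fun a _ b _ hab => disjoint_left.2 fun hl hl' => ?_
    obtain ⟨l, -, rfl⟩ := mem_map.1 hl
    obtain ⟨l', -, h⟩ := mem_map.1 hl'
    exact hab (List.cons_eq_cons.1 h).1.symm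
  · simp only [mem_lists_iff, quot_mk_to_coe, mem_bind, mem_map]
    constructor
    · rintro rfl
      obtain ⟨k, l', rfl⟩ := List.exists_cons_of_ne_nil (l := l) (by rintro rfl; exact h0 rfl)
      exact ⟨k, by simp, l', by simp, rfl⟩
    · rintro ⟨k, hk, l', hl', rfl⟩
      rw [← cons_erase hk, hl', cons_coe]

noncomputable def listsMean (s : Multiset α) (F : List α → ℝ) : ℝ :=
  (s.lists.map F).sum / (card s)!

theorem listsMean_congr {s : Multiset α} {F G : List α → ℝ} (h : ∀ l ∈ s.lists, F l = G l) :
    listsMean s F = listsMean s G := by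
  rw [listsMean, map_congr rfl h, listsMean]

theorem listsMean_add (s : Multiset α) (F G : List α → ℝ) :
    listsMean s (fun l => F l + G l) = listsMean s F + listsMean s G := by
  simp only [listsMean, sum_map_add, add_div]

theorem listsMean_const (s : Multiset α) (c : ℝ) : listsMean s (fun _ => c) = c := by
  have : ((card s)! : ℝ) ≠ 0 := by positivity
  simp only [listsMean, map_const', card_lists, sum_replicate, nsmul_eq_mul]
  field_simp

theorem listsMean_filter (p : α → Prop) [DecidablePred p] (s : Multiset α) (F : List α → ℝ) :
    listsMean s (fun l => F (l.filter (p ·))) = listsMean (s.filter p) F := by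
  have h := congrArg (fun M => (M.map F).sum) (card_filter_factorial_nsmul_map_filter_lists p s)
  simp only [map_nsmul, sum_nsmul, map_map, nsmul_eq_mul, Function.comp_def] at h
  rw [listsMean, listsMean, div_eq_div_iff (by positivity) (by positivity)]
  linear_combination h

theorem listsMean_map (f : α → β) (s : Multiset α) (F : List β → ℝ) :
    listsMean (s.map f) F = listsMean s (fun l => F (l.map f)) := by
  rw [listsMean, lists_map, map_map, card_map]
  rfl

end Multiset

theorem Finset.listsMean_val_eq_sum_erase {α : Type*} [DecidableEq α] (s : Finset α)
    (hs : s.Nonempty) (F : List α → ℝ) :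
    s.val.listsMean F = (∑ k ∈ s, (s.erase k).val.listsMean fun l => F (k :: l)) / #s := by
  have hfact : ((#s)! : ℝ) = #s * (#s - 1)! := by
    rw [← Nat.mul_factorial_pred hs.card_pos.ne']
    push_cast
    rfl
  have hterm : ∀ k ∈ s, ((s.erase k).val.listsMean fun l => F (k :: l)) =
      (((s.val.erase k).lists.map (List.cons k)).map F).sum / (#s - 1)! := fun k hk => by
    rw [Multiset.listsMean, erase_val, Multiset.card_erase_of_mem hk, Multiset.map_map]
    rfl
  rw [sum_congr rfl hterm, ← sum_div, div_div, mul_comm, ← hfact, Multiset.listsMean,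
    s.nodup.lists_eq_bind (nonempty_iff_ne_empty.1 hs ∘ val_eq_zero.1), Multiset.map_bind,
    Multiset.sum_bind, card_val]
  rfl

/- Placing `P n` inside the infinite path `hasse ℕ` makes the part to the right of the first
revealed vertex a translate of a path starting at `0`. -/
theorem hasse_nat_adj {a b : ℕ} : (hasse ℕ).Adj a b ↔ a + 1 = b ∨ b + 1 = a := by
  simp [SimpleGraph.hasse_adj, Nat.covBy_iff_add_one_eq]

instance : DecidableRel (hasse ℕ).Adj := fun _ _ => decidable_of_iff' _ hasse_nat_adj

def pathGraph.valEmbedding (n : ℕ) : pathGraph n ↪g hasse ℕ where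
  toFun := Fin.val
  inj' := Fin.val_injective
  map_rel_iff' := hasse_nat_adj

def hasseNatAddRight (c : ℕ) : hasse ℕ ↪g hasse ℕ where
  toFun := (· + c)
  inj' := add_left_injective c
  map_rel_iff' {a b} := by simp only [Function.Embedding.coeFn_mk, hasse_nat_adj]; omega

theorem card_domList_map_add (c : ℕ) (l : List ℕ) :
    #(domList (hasse ℕ) (l.map (· + c))) = #(domList (hasse ℕ) l) :=
  (congrArg card (domList_map (hasseNatAddRight c) l)).trans (card_map _)

theorem gamma_eq_card_domList (n : ℕ) (π : Equiv.Perm (Fin n)) :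
    gamma n π = #(domList (hasse ℕ) (List.ofFn fun i => (π i : ℕ))) := by
  have h := domList_map (pathGraph.valEmbedding n) (List.ofFn fun i => π i)
  rw [List.map_ofFn] at h
  exact (card_map _).symm.trans (congrArg card h.symm)

theorem card_domList_hasse_cons {k : ℕ} {l : List ℕ} (hk : k ∉ l) :
    #(domList (hasse ℕ) (k :: l)) =
      #(domList (hasse ℕ) (l.filter (· + 1 < k))) +
        #(domList (hasse ℕ) (l.filter (k + 1 < ·))) + 1 := by
  set l' := l.filter (¬ (hasse ℕ).Adj k ·)
  have hne : ∀ v ∈ l, v ≠ k := fun v hv h => hk (h ▸ hv)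
  have hk' : k ∉ domList (hasse ℕ) l' := fun h => hk (by simpa [l'] using domList_subset l' h)
  have hsplit : ∀ u ∈ l', ∀ v ∈ l', (hasse ℕ).Adj u v → (u < k ↔ v < k) := by
    intro u hu v hv huv
    simp only [l', List.mem_filter, hasse_nat_adj, decide_eq_true_eq] at hu hv huv
    have := hne u hu.1
    have := hne v hv.1
    omega
  have hleft : l'.filter (· < k) = l.filter (· + 1 < k) := by
    rw [List.filter_filter]
    refine List.filter_congr fun v hv => ?_
    have := hne v hv
    rw [Bool.eq_iff_iff]
    simp only [Bool.and_eq_true, decide_eq_true_eq, hasse_nat_adj]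
    omega
  have hright : l'.filter (¬ · < k) = l.filter (k + 1 < ·) := by
    rw [List.filter_filter]
    refine List.filter_congr fun v hv => ?_
    have := hne v hv
    rw [Bool.eq_iff_iff]
    simp only [Bool.and_eq_true, decide_eq_true_eq, hasse_nat_adj]
    omega
  rw [domList_cons, card_insert_of_notMem hk', card_domList_eq_add (· < k) l' hsplit, hleft,
    hright]

theorem univ_val_map_ofFn_eq_lists_range (n : ℕ) :
    (univ : Finset (Equiv.Perm (Fin n))).val.map (fun π => List.ofFn fun i => (π i : ℕ)) =
      (range n).val.lists := by
  have hinj : ∀ π : Equiv.Perm (Fin n), Function.Injective fun i => (π i : ℕ) := fun π =>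
    Fin.val_injective.comp π.injective
  refine Multiset.eq_of_le_of_card_le ((Multiset.le_iff_subset ?_).2 fun l hl => ?_) ?_
  · refine univ.nodup.map fun π π' h => Equiv.ext fun i => Fin.ext ?_
    exact congrFun (List.ofFn_injective h) i
  · obtain ⟨π, -, rfl⟩ := Multiset.mem_map.1 hl
    refine (Multiset.mem_lists_iff _ _).2 <| (Multiset.Nodup.ext (range n).nodup
      (Multiset.coe_nodup.2 (List.nodup_ofFn.2 (hinj π)))).2 fun x => ?_
    simp only [range_val, Multiset.mem_range, Multiset.mem_coe, List.mem_ofFn]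
    exact ⟨fun hx => ⟨π.symm ⟨x, hx⟩, by simp⟩, fun ⟨i, hi⟩ => hi ▸ (π i).2⟩
  · simp [Multiset.card_lists, Fintype.card_perm]

theorem gammaOPath_eq_listsMean (n : ℕ) :
    gammaOPath n = (range n).val.listsMean fun l => #(domList (hasse ℕ) l) := by
  simp only [gammaOPath, gamma_eq_card_domList, Multiset.listsMean,
    ← univ_val_map_ofFn_eq_lists_range, Multiset.map_map, card_val, card_range]
  rfl

theorem gammaOPath_zero : gammaOPath 0 = 0 := by
  simp [gammaOPath, gamma, GammaSet, domList]

theorem listsMean_map_addRight_card_domList (s : Finset ℕ) (c : ℕ) :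
    (s.map (addRightEmbedding c)).val.listsMean (fun l => #(domList (hasse ℕ) l)) =
      s.val.listsMean fun l => #(domList (hasse ℕ) l) := by
  rw [map_val, Multiset.listsMean_map]
  exact Multiset.listsMean_congr fun l _ => congrArg Nat.cast (card_domList_map_add c l)

theorem listsMean_erase_range_card_domList_cons {m k : ℕ} (hk : k ≤ m) :
    ((range (m + 1)).erase k).val.listsMean (fun l => #(domList (hasse ℕ) (k :: l))) =
      gammaOPath (k - 1) + gammaOPath (m - k - 1) + 1 := by
  set s := (range (m + 1)).erase k
  have hleft : s.filter (· + 1 < k) = range (k - 1) := by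
    ext x
    simp [s]
    omega
  have hright : s.filter (k + 1 < ·) = (range (m - k - 1)).map (addRightEmbedding (k + 2)) := by
    ext x
    simp only [s, mem_filter, mem_erase, mem_range, mem_map, addRightEmbedding_apply]
    exact ⟨fun hx => ⟨x - (k + 2), by omega, by omega⟩, by rintro ⟨a, ha, rfl⟩; omega⟩
  have hcons : ∀ l ∈ s.val.lists, (#(domList (hasse ℕ) (k :: l)) : ℝ) =
      #(domList (hasse ℕ) (l.filter (· + 1 < k))) +
        #(domList (hasse ℕ) (l.filter (k + 1 < ·))) + 1 := by
    intro l hl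
    have hkl : k ∉ l := by
      rw [← Multiset.mem_coe, ← Multiset.quot_mk_to_coe, ← (Multiset.mem_lists_iff _ _).1 hl]
      exact fun h => notMem_erase k (range (m + 1)) h
    rw [card_domList_hasse_cons hkl]
    push_cast
    rfl
  rw [Multiset.listsMean_congr hcons, Multiset.listsMean_add, Multiset.listsMean_add,
    Multiset.listsMean_const,
    Multiset.listsMean_filter (· + 1 < k) _ fun l => (#(domList (hasse ℕ) l) : ℝ),
    Multiset.listsMean_filter (k + 1 < ·) _ fun l => (#(domList (hasse ℕ) l) : ℝ),
    ← filter_val, ← filter_val, hleft, hright, listsMean_map_addRight_card_domList,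
    ← gammaOPath_eq_listsMean, ← gammaOPath_eq_listsMean]

theorem sum_range_succ_gammaOPath_pred (m : ℕ) :
    ∑ k ∈ range (m + 1), gammaOPath (k - 1) = ∑ i ∈ Icc 1 (m - 1), gammaOPath i := by
  rw [sum_range_succ', zero_tsub, gammaOPath_zero, add_zero]
  refine (sum_subset (fun i hi => by simp at hi ⊢; omega) fun i hi hi' => ?_).symm
  obtain rfl : i = 0 := by simp at hi hi'; omega
  exact gammaOPath_zero

theorem expected_online_domination_recurrence (n : ℕ) (hn : 1 ≤ n) :
    gammaOPath n = 1 + (2 / (n : ℝ)) * ∑ i ∈ Finset.Icc 1 (n - 2), gammaOPath i := by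
  obtain ⟨m, rfl⟩ : ∃ m, n = m + 1 := ⟨n - 1, by omega⟩
  have hreflect : ∑ k ∈ range (m + 1), gammaOPath (m - k - 1) =
      ∑ k ∈ range (m + 1), gammaOPath (k - 1) := by
    rw [← sum_range_reflect]
    exact sum_congr rfl fun k hk => by congr 1; simp at hk; omega
  rw [gammaOPath_eq_listsMean, listsMean_val_eq_sum_erase _ (nonempty_range_iff.2 (by omega)),
    sum_congr rfl fun k hk =>
      listsMean_erase_range_card_domList_cons (Nat.lt_succ_iff.1 (mem_range.1 hk)),
    sum_add_distrib, sum_add_distrib, hreflect, sum_range_succ_gammaOPath_pred, sum_const,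
    card_range, show m + 1 - 2 = m - 1 by omega, nsmul_one]
  push_cast
  field_simp
  ring
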